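/- For every graph G = (V,E) with at least one edge, cutwidth(G) ≤ pathwidth(G') ≤ 2·cutwidth(G), where G' is the graph with vertex set {v_u : {u,v} ∈ E} (one vertex for each incidence of a vertex v with an edge {u,v}) and edges {u_v, v_u} for each edge {u,v} ∈ E, together with edges {v_u, v_w} for all distinct neighbours u, w of each vertex v. -/

import Mathlib

noncomputable section

attribute [local instance] Classical.propDecidable

/-- `B 0, B 1, ..., B m` is a path decomposition of the graph `G`: every edge is
covered by some bag, and the bags containing any fixed vertex form a nonempty
contiguous interval of indices. -/
def IsPathDecomp {W : Type*} (G : SimpleGraph W) (m : ℕ) (B : ℕ → Finset W) : Prop :=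
  (∀ u v, G.Adj u v → ∃ t ≤ m, u ∈ B t ∧ v ∈ B t) ∧
  (∀ v : W, ∃ i j, i ≤ j ∧ j ≤ m ∧ ∀ t, v ∈ B t ↔ (i ≤ t ∧ t ≤ j))

/-- The pathwidth of a graph: the minimum, over path decompositions, of the
maximum bag size minus one. -/
def pathwidth {W : Type*} (G : SimpleGraph W) : ℕ :=
  sInf {w | ∃ m B, IsPathDecomp G m B ∧ ∀ t, (B t).card ≤ w + 1}

variable {V : Type*} [DecidableEq V] [Fintype V]

/-- The number of edges of `G` crossing the cut `(S, Sᶜ)`, counted via their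
orientation from `S` to `Sᶜ`. -/
def cutSizeSG (G : SimpleGraph V) (S : Finset V) : ℕ :=
  (Finset.univ.filter (fun p : V × V => G.Adj p.1 p.2 ∧ p.1 ∈ S ∧ p.2 ∉ S)).card

/-- The cutwidth of the linear arrangement `L`: the maximum number of edges
crossing any prefix cut of `L`. -/
def cwVal (G : SimpleGraph V) (L : List V) : ℕ :=
  Finset.sup (Finset.range (L.length + 1)) (fun i => cutSizeSG G (L.take i).toFinset)

/-- The cutwidth of `G`: the minimum cutwidth over all linear arrangements of the
vertices of `G`. -/
def cutwidthSG (G : SimpleGraph V) : ℕ :=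
  sInf {n | ∃ L : List V, L.Nodup ∧ (∀ v, v ∈ L) ∧ cwVal G L = n}

/-- The incidence-split graph `G'` of `G`: one vertex `v_u = (v, u)` for each
incidence of a vertex `v` with an edge `{u, v}` of `G`; edges `{u_v, v_u}` for
every edge `{u, v}` of `G`, plus a clique on `{v_u : u ∼ v}` for every vertex `v`. -/
def splitGraph (G : SimpleGraph V) : SimpleGraph {p : V × V // G.Adj p.1 p.2} :=
  SimpleGraph.fromRel (fun a b =>
    (a.val.1 = b.val.2 ∧ a.val.2 = b.val.1) ∨ a.val.1 = b.val.1)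

/-!
Upper bound: given an arrangement `π` of `G`, run time twice as fast as `π` and keep `v_u` in the
bag while the edge `vu` crosses the current prefix cut in one of its two orientations. The two
orientations of an edge overlap, and so do the incidences of a vertex at its own position, so
every edge of `G'` is covered, and a bag consists of the edges crossing two prefix cuts.

Lower bound: order the vertices of `G'` by the bag in which they first appear, and the vertices of
`G` by their last incidence in that order. An edge leaving a prefix of this arrangement yields an
incidence below some threshold adjacent to one above it; these incidences are distinct and all lie,
together with the first vertex above the threshold, in the bag where that vertex appears.
-/

open Finset

lemma pathwidth_le {W : Type*} {H : SimpleGraph W} {m w : ℕ} {B : ℕ → Finset W}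
    (hB : IsPathDecomp H m B) (hcard : ∀ t, #(B t) ≤ w + 1) : pathwidth H ≤ w := by
  rw [pathwidth]
  apply Nat.sInf_le
  exact ⟨m, B, hB, hcard⟩

lemma exists_isPathDecomp_card_le_pathwidth {W : Type*} {H : SimpleGraph W} {m w : ℕ}
    {B : ℕ → Finset W} (hB : IsPathDecomp H m B) (hcard : ∀ t, #(B t) ≤ w + 1) :
    ∃ m B, IsPathDecomp H m B ∧ ∀ t, #(B t) ≤ pathwidth H + 1 :=
  Nat.sInf_mem (s := {w | ∃ m B, IsPathDecomp H m B ∧ ∀ t, #(B t) ≤ w + 1}) ⟨w, m, B, hB, hcard⟩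

lemma cutwidthSG_le_cwVal (G : SimpleGraph V) {L : List V} (hnd : L.Nodup) (hL : ∀ v, v ∈ L) :
    cutwidthSG G ≤ cwVal G L :=
  Nat.sInf_le ⟨L, hnd, hL, rfl⟩

lemma exists_cwVal_eq_cutwidthSG (G : SimpleGraph V) :
    ∃ L : List V, L.Nodup ∧ (∀ v, v ∈ L) ∧ cwVal G L = cutwidthSG G :=
  Nat.sInf_mem (s := {n | ∃ L : List V, L.Nodup ∧ (∀ v, v ∈ L) ∧ cwVal G L = n})
    ⟨_, _, nodup_toList univ, fun v => by simp, rfl⟩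

omit [DecidableEq V] [Fintype V] in
lemma splitGraph_adj {G : SimpleGraph V} {x y : {p : V × V // G.Adj p.1 p.2}} :
    (splitGraph G).Adj x y ↔ x ≠ y ∧ ((x.1.1 = y.1.2 ∧ x.1.2 = y.1.1) ∨ x.1.1 = y.1.1) := by
  rw [splitGraph, SimpleGraph.fromRel_adj]
  grind

lemma cutSizeSG_take_le_cwVal (G : SimpleGraph V) (L : List V) (s : ℕ) :
    cutSizeSG G (L.take s).toFinset ≤ cwVal G L := by
  rw [List.take_eq_take_min]
  exact le_sup (f := fun i => cutSizeSG G (L.take i).toFinset) (mem_range.2 (by omega))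

lemma cutSizeSG_take_eq (G : SimpleGraph V) {L : List V} (hL : ∀ v, v ∈ L) (k : ℕ) :
    cutSizeSG G (L.take k).toFinset =
      #{p : V × V | G.Adj p.1 p.2 ∧ L.idxOf p.1 < k ∧ k ≤ L.idxOf p.2} := by
  simp only [cutSizeSG, List.mem_toFinset, List.mem_take_iff_idxOf_lt (hL _), not_lt]

/-- For `π v < π u` the vertex `v_u` is alive during `[2 π v + 1, 2 π u]`, otherwise during
`[2 π u + 2, 2 π v + 1]`. -/
def prefixBag (G : SimpleGraph V) (π : V → ℕ) (t : ℕ) : Finset {p : V × V // G.Adj p.1 p.2} :=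
  {x | (π x.1.1 < (t + 1) / 2 ∧ (t + 1) / 2 ≤ π x.1.2) ∨ (π x.1.2 < t / 2 ∧ t / 2 ≤ π x.1.1)}

lemma card_prefixBag_le (G : SimpleGraph V) (π : V → ℕ) (t : ℕ) :
    #(prefixBag G π t) ≤
      #{p : V × V | G.Adj p.1 p.2 ∧ π p.1 < (t + 1) / 2 ∧ (t + 1) / 2 ≤ π p.2} +
      #{p : V × V | G.Adj p.1 p.2 ∧ π p.1 < t / 2 ∧ t / 2 ≤ π p.2} := by
  rw [prefixBag, filter_or]
  refine (card_union_le _ _).trans (add_le_add ?_ ?_)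
  · refine card_le_card_of_injOn (fun x => x.1) (fun x hx => ?_) Subtype.val_injective.injOn
    simp only [coe_filter, mem_univ, true_and, Set.mem_ofPred_eq] at hx ⊢
    exact ⟨x.2, hx⟩
  · refine card_le_card_of_injOn (fun x => x.1.swap) (fun x hx => ?_)
      (Prod.swap_injective.comp Subtype.val_injective).injOn
    simp only [coe_filter, mem_univ, true_and, Set.mem_ofPred_eq, Prod.fst_swap,
      Prod.snd_swap] at hx ⊢
    exact ⟨G.adj_symm x.2, hx⟩

omit [DecidableEq V] in
lemma isPathDecomp_prefixBag (G : SimpleGraph V) {π : V → ℕ} (hπ : Function.Injective π) {n : ℕ}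
    (hn : ∀ v, π v < n) : IsPathDecomp (splitGraph G) (2 * n) (prefixBag G π) := by
  have hne (x : {p : V × V // G.Adj p.1 p.2}) : π x.1.1 ≠ π x.1.2 :=
    fun h => G.ne_of_adj x.2 (hπ h)
  simp only [IsPathDecomp, prefixBag, mem_filter, mem_univ, true_and]
  refine ⟨fun x y hxy => ?_, fun x => ?_⟩
  · have := hn x.1.1; have := hn x.1.2; have := hne x; have := hn y.1.2; have := hne y
    obtain ⟨-, ⟨h1, h2⟩ | h⟩ := splitGraph_adj.1 hxy
    · have := congrArg π h1; have := congrArg π h2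
      exact ⟨2 * min (π x.1.1) (π x.1.2) + 2, by omega, by omega, by omega⟩
    · have := congrArg π h
      exact ⟨2 * π x.1.1 + 1, by omega, by omega, by omega⟩
  · have := hn x.1.1; have := hn x.1.2; have := hne x
    by_cases h : π x.1.1 < π x.1.2
    · exact ⟨2 * π x.1.1 + 1, 2 * π x.1.2, by omega, by omega, fun t => by omega⟩
    · exact ⟨2 * π x.1.2 + 2, 2 * π x.1.1 + 1, by omega, by omega, fun t => by omega⟩

lemma exists_isPathDecomp_splitGraph_card_le (G : SimpleGraph V) {L : List V} (hL : ∀ v, v ∈ L) :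
    ∃ m B, IsPathDecomp (splitGraph G) m B ∧ ∀ t, #(B t) ≤ 2 * cwVal G L + 1 := by
  refine ⟨2 * L.length, prefixBag G L.idxOf,
    isPathDecomp_prefixBag G (fun a b h => (List.idxOf_inj (hL a)).1 h)
      (fun v => List.idxOf_lt_length_iff.2 (hL v)), fun t => ?_⟩
  have h1 := cutSizeSG_take_le_cwVal G L ((t + 1) / 2)
  have h2 := cutSizeSG_take_le_cwVal G L (t / 2)
  rw [cutSizeSG_take_eq G hL] at h1 h2
  exact (card_prefixBag_le G _ t).trans (by omega)

def lowerBoundary {W : Type*} [Fintype W] (H : SimpleGraph W) (key : W → ℕ) (κ : ℕ) : Finset W :=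
  {z | key z < κ ∧ ∃ x, κ ≤ key x ∧ H.Adj z x}

/-- Every vertex of the boundary is still alive when the first vertex above level `κ` appears. -/
theorem IsPathDecomp.card_lowerBoundary_le {W : Type*} [Fintype W] {H : SimpleGraph W}
    {m w : ℕ} {B : ℕ → Finset W} (hB : IsPathDecomp H m B) (hcard : ∀ t, #(B t) ≤ w + 1)
    {ix jx : W → ℕ} (hint : ∀ x t, x ∈ B t ↔ ix x ≤ t ∧ t ≤ jx x) {key : W → ℕ}
    (hkey : ∀ x y, key x ≤ key y → ix x ≤ ix y) (κ : ℕ) :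
    #(lowerBoundary H key κ) ≤ w := by
  obtain hempty | ⟨z, hz⟩ := (lowerBoundary H key κ).eq_empty_or_nonempty
  · simp [hempty]
  obtain ⟨-, x, hx, -⟩ := (mem_filter.1 hz).2
  obtain ⟨y, hy, hymin⟩ := exists_min_image {x | κ ≤ key x} key ⟨x, by simpa using hx⟩
  simp only [mem_filter, mem_univ, true_and] at hy hymin
  have hyB : y ∈ B (ix y) := by
    obtain ⟨i, j, hij, -, hmem⟩ := hB.2 y
    have := (hint y i).1 ((hmem i).2 ⟨le_rfl, hij⟩)
    exact (hint y _).2 ⟨le_rfl, by omega⟩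
  have hsub : lowerBoundary H key κ ⊆ (B (ix y)).erase y := by
    intro z hz
    obtain ⟨hzκ, x, hxκ, hzx⟩ := (mem_filter.1 hz).2
    obtain ⟨t, -, hzt, hxt⟩ := hB.1 z x hzx
    have hyx := hkey y x (hymin x hxκ)
    have hzy := hkey z y (by omega)
    rw [hint] at hzt hxt
    exact mem_erase.2 ⟨by rintro rfl; omega, (hint z _).2 ⟨hzy, by omega⟩⟩
  have := card_le_card hsub
  rw [card_erase_of_mem hyB] at this
  have := hcard (ix y)
  omega

lemma exists_injective_refining {α : Type*} [Fintype α] (f : α → ℕ) :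
    ∃ g : α → ℕ, Function.Injective g ∧ ∀ x y, g x ≤ g y → f x ≤ f y := by
  let e := Fintype.equivFin α
  have hle (x y : α) (h : f x * Fintype.card α + e x ≤ f y * Fintype.card α + e y) :
      f x ≤ f y := by
    by_contra! hlt
    have hmul := Nat.mul_le_mul_right (Fintype.card α) hlt
    rw [Nat.succ_mul] at hmul
    have := (e y).isLt
    omega
  refine ⟨fun x => f x * Fintype.card α + e x, fun x y h => e.injective (Fin.ext ?_),
    fun x y => hle x y⟩
  have := le_antisymm (hle x y h.le) (hle y x h.ge)
  simp only [this] at h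
  omega

/-- The `+ 1` makes `0` the rank of exactly the isolated vertices. -/
def incidenceRank (G : SimpleGraph V) (key : {p : V × V // G.Adj p.1 p.2} → ℕ) (v : V) : ℕ :=
  ({x | x.1.1 = v} : Finset {p : V × V // G.Adj p.1 p.2}).sup fun x => key x + 1

section incidenceRank

variable {G : SimpleGraph V} {key : {p : V × V // G.Adj p.1 p.2} → ℕ}

lemma key_lt_incidenceRank (x : {p : V × V // G.Adj p.1 p.2}) :
    key x < incidenceRank G key x.1.1 :=
  Nat.lt_of_succ_le (le_sup (f := fun x => key x + 1) (by simp))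

lemma exists_key_add_one_eq_incidenceRank {v : V} (hv : 0 < incidenceRank G key v) :
    ∃ x : {p : V × V // G.Adj p.1 p.2}, x.1.1 = v ∧ key x + 1 = incidenceRank G key v := by
  obtain hempty | hne :=
    ({x | x.1.1 = v} : Finset {p : V × V // G.Adj p.1 p.2}).eq_empty_or_nonempty
  · simp [incidenceRank, hempty] at hv
  obtain ⟨x, hx, hxv⟩ := exists_mem_eq_sup _ hne fun x => key x + 1
  exact ⟨x, by simpa using hx, hxv.symm⟩

lemma eq_of_incidenceRank_eq (hkey : Function.Injective key) {u v : V}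
    (hv : 0 < incidenceRank G key v) (huv : incidenceRank G key u = incidenceRank G key v) :
    u = v := by
  obtain ⟨x, rfl, hx⟩ := exists_key_add_one_eq_incidenceRank hv
  obtain ⟨y, rfl, hy⟩ := exists_key_add_one_eq_incidenceRank (hv.trans_eq huv.symm)
  rw [hkey (by omega : key y = key x)]

lemma sup_incidenceRank_lt (hkey : Function.Injective key) {S : Finset V}
    (hS : ∀ a ∈ S, ∀ b ∉ S, incidenceRank G key a ≤ incidenceRank G key b) {b : V} (hb : b ∉ S)
    (hpos : 0 < incidenceRank G key b) : S.sup (incidenceRank G key) < incidenceRank G key b :=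
  (Finset.sup_lt_iff hpos).2 fun a ha =>
    (hS a ha b hb).lt_of_ne fun h => hb (eq_of_incidenceRank_eq hkey hpos h ▸ ha)

end incidenceRank

lemma exists_arrangement_monotone (f : V → ℕ) :
    ∃ L : List V, L.Nodup ∧ (∀ v, v ∈ L) ∧
      ∀ s, ∀ a ∈ (L.take s).toFinset, ∀ b ∉ (L.take s).toFinset, f a ≤ f b := by
  set L := (Finset.univ : Finset V).toList.mergeSort fun a b => decide (f a ≤ f b)
  have hperm : L.Perm Finset.univ.toList := List.mergeSort_perm _ _
  have hsorted : L.Pairwise fun a b => f a ≤ f b := by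
    simpa using List.pairwise_mergeSort (le := fun a b => decide (f a ≤ f b))
      (fun a b c hab hbc => by simp only [decide_eq_true_eq] at *; omega)
      (fun a b => by simp only [decide_eq_true_eq, Bool.or_eq_true]; omega) Finset.univ.toList
  refine ⟨L, hperm.nodup_iff.2 (nodup_toList _), fun v => hperm.mem_iff.2 (by simp),
    fun s a ha b hb => ?_⟩
  have hb' : b ∈ L.drop s := by
    have := hperm.mem_iff.2 (mem_toList.2 (mem_univ b))
    rw [← List.take_append_drop s L, List.mem_append] at this
    exact this.resolve_left (by simpa using hb)
  rw [← List.take_append_drop s L, List.pairwise_append] at hsorted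
  exact hsorted.2.2 a (by simpa using ha) b hb'

/-- An edge `ab` leaving `S` is witnessed by `a_b` when `b_a` lies above `κ`, and by `b_a`
otherwise, since `b_a` is then adjacent to the highest incidence of `b`. -/
lemma cutSizeSG_le_card_lowerBoundary (G : SimpleGraph V)
    (key : {p : V × V // G.Adj p.1 p.2} → ℕ) (S : Finset V) (κ : ℕ)
    (hS : ∀ a b (hab : G.Adj a b), a ∈ S → b ∉ S →
      key ⟨(a, b), hab⟩ < κ ∧ ∃ x : {p : V × V // G.Adj p.1 p.2}, x.1.1 = b ∧ κ ≤ key x) :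
    cutSizeSG G S ≤ #(lowerBoundary (splitGraph G) key κ) := by
  refine card_le_card_of_surjOn (fun x => if x.1.1 ∈ S then x.1 else x.1.swap) ?_
  rintro ⟨a, b⟩ hab
  simp only [coe_filter, mem_univ, true_and, Set.mem_ofPred_eq] at hab
  obtain ⟨hab, ha, hb⟩ := hab
  obtain ⟨hlt, x, hxb, hx⟩ := hS a b hab ha hb
  simp only [lowerBoundary, coe_filter, mem_univ, true_and, Set.mem_image, Set.mem_ofPred_eq]
  by_cases hba : κ ≤ key ⟨(b, a), G.adj_symm hab⟩
  · refine ⟨⟨(a, b), hab⟩, ⟨hlt, _, hba, splitGraph_adj.2 ⟨?_, Or.inl ⟨rfl, rfl⟩⟩⟩, by simp [ha]⟩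
    exact fun h => G.ne_of_adj hab (congrArg (fun x => x.1.1) h)
  · refine ⟨⟨(b, a), G.adj_symm hab⟩, ⟨by omega, x, hx, splitGraph_adj.2 ⟨?_, Or.inr hxb.symm⟩⟩,
      by simp [hb]⟩
    rintro rfl
    omega

theorem cutwidthSG_le_of_isPathDecomp (G : SimpleGraph V) {m w : ℕ}
    {B : ℕ → Finset {p : V × V // G.Adj p.1 p.2}} (hB : IsPathDecomp (splitGraph G) m B)
    (hcard : ∀ t, #(B t) ≤ w + 1) : cutwidthSG G ≤ w := by
  choose ix jx _ _ hint using hB.2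
  obtain ⟨key, hinj, hkey⟩ := exists_injective_refining ix
  obtain ⟨L, hnd, hall, hsorted⟩ := exists_arrangement_monotone (incidenceRank G key)
  refine (cutwidthSG_le_cwVal G hnd hall).trans (Finset.sup_le fun s _ => ?_)
  refine (cutSizeSG_le_card_lowerBoundary G key _ ((L.take s).toFinset.sup (incidenceRank G key))
    fun a b hab ha hb => ⟨?_, ?_⟩).trans (hB.card_lowerBoundary_le hcard hint hkey _)
  · exact (key_lt_incidenceRank (x := ⟨(a, b), hab⟩)).trans_le (le_sup ha)
  · have hpos : 0 < incidenceRank G key b :=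
      (key_lt_incidenceRank ⟨(b, a), G.adj_symm hab⟩).trans_le' (Nat.zero_le _)
    obtain ⟨x, hxb, hx⟩ := exists_key_add_one_eq_incidenceRank hpos
    have := sup_incidenceRank_lt hinj (hsorted s) hb hpos
    exact ⟨x, hxb, by omega⟩

theorem cutwidth_le_pathwidth_split_le_two_mul_general (G : SimpleGraph V) :
    cutwidthSG G ≤ pathwidth (splitGraph G) ∧
      pathwidth (splitGraph G) ≤ 2 * cutwidthSG G := by
  obtain ⟨L, -, hall, hL⟩ := exists_cwVal_eq_cutwidthSG G
  obtain ⟨m, B, hB, hcard⟩ := exists_isPathDecomp_splitGraph_card_le G hall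
  obtain ⟨m', B', hB', hcard'⟩ := exists_isPathDecomp_card_le_pathwidth hB hcard
  exact ⟨cutwidthSG_le_of_isPathDecomp G hB' hcard', hL ▸ pathwidth_le hB hcard⟩

/-- For every graph `G` with at least one edge,
`cutwidth(G) ≤ pathwidth(G') ≤ 2 · cutwidth(G)`. -/
theorem cutwidth_le_pathwidth_split_le_two_mul (G : SimpleGraph V)
    (h : ∃ u v, G.Adj u v) :
    cutwidthSG G ≤ pathwidth (splitGraph G) ∧
      pathwidth (splitGraph G) ≤ 2 * cutwidthSG G :=
  cutwidth_le_pathwidth_split_le_two_mul_general G
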